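/- Let γ ≤ 0, p ≥ 5, ω > γ²/4. Suppose d(ω) > 0 and let v ∈ H¹(ℝ), v ≠ 0, be radial (even) with Q_γ(v) = 0 and I_{ω,γ}(v) < 0. Then S_{ω,γ}(v) ≥ d(ω), where d(ω) = inf{ S_{ω,γ}(w) : w ∈ H¹_rad(ℝ)∖{0}, I_{ω,γ}(w) = 0 }. -/

import Mathlib

open Real MeasureTheory

noncomputable def gradSq (v : ℝ → ℝ) : ℝ := ∫ x : ℝ, (deriv v x) ^ 2
noncomputable def l2Sq (v : ℝ → ℝ) : ℝ := ∫ x : ℝ, (v x) ^ 2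
noncomputable def lpp (p : ℝ) (v : ℝ → ℝ) : ℝ := ∫ x : ℝ, |v x| ^ (p + 1)
noncomputable def Ifun (ω γ p : ℝ) (v : ℝ → ℝ) : ℝ :=
  gradSq v + ω * l2Sq v - γ * (v 0) ^ 2 - lpp p v
noncomputable def Sfun (ω γ p : ℝ) (v : ℝ → ℝ) : ℝ :=
  gradSq v / 2 + ω / 2 * l2Sq v - γ / 2 * (v 0) ^ 2 - lpp p v / (p + 1)
noncomputable def Qfun (γ p : ℝ) (v : ℝ → ℝ) : ℝ :=
  gradSq v - γ / 2 * (v 0) ^ 2 - (p - 1) / (2 * (p + 1)) * lpp p v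
noncomputable def sc (α : ℝ) (v : ℝ → ℝ) : ℝ → ℝ := fun x => Real.sqrt α * v (α * x)
noncomputable def dil (β : ℝ) (v : ℝ → ℝ) : ℝ → ℝ := fun x => v (β * x)
def InH1 (p : ℝ) (v : ℝ → ℝ) : Prop :=
  Continuous v ∧ MeasureTheory.Integrable (fun x : ℝ => (v x) ^ 2) ∧
    MeasureTheory.Integrable (fun x : ℝ => (deriv v x) ^ 2) ∧
    MeasureTheory.Integrable (fun x : ℝ => |v x| ^ (p + 1))

noncomputable def NehariInf (ω γ p : ℝ) : ℝ :=
  sInf {s : ℝ | ∃ w : ℝ → ℝ, InH1 p w ∧ (∀ x, w (-x) = w x) ∧ w ≠ 0 ∧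
    Ifun ω γ p w = 0 ∧ s = Sfun ω γ p w}

/-! ### Auxiliary lemmas -/

lemma deriv_comp_mul (v : ℝ → ℝ) {α : ℝ} (hα : α ≠ 0) (x : ℝ) :
    deriv (fun y => v (α * y)) x = α * deriv v (α * x) := by
  by_cases h : DifferentiableAt ℝ v (α * x)
  · have h1 : HasDerivAt (fun y : ℝ => α * y) α x := by
      simpa using (hasDerivAt_id x).const_mul α
    have h2 : HasDerivAt (fun y : ℝ => v (α * y)) (deriv v (α * x) * α) x :=
      HasDerivAt.comp x (h.hasDerivAt) h1
    rw [h2.deriv, mul_comm]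
  · have h2 : ¬ DifferentiableAt ℝ (fun y : ℝ => v (α * y)) x := by
      intro hd
      apply h
      have h3 : DifferentiableAt ℝ (fun z : ℝ => α⁻¹ * z) (α * x) :=
        (differentiable_id.const_mul _).differentiableAt
      have h4 : DifferentiableAt ℝ ((fun y : ℝ => v (α * y)) ∘ fun z : ℝ => α⁻¹ * z)
          (α * x) := by
        apply DifferentiableAt.comp
        · have : α⁻¹ * (α * x) = x := by field_simp
          rw [this]; exact hd
        · exact h3
      have h5 : ((fun y : ℝ => v (α * y)) ∘ fun z : ℝ => α⁻¹ * z) = v := by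
        funext z; simp only [Function.comp_apply]
        congr 1; field_simp
      rwa [h5] at h4
    rw [deriv_zero_of_not_differentiableAt h, deriv_zero_of_not_differentiableAt h2,
      mul_zero]

lemma deriv_sc (v : ℝ → ℝ) {α : ℝ} (hα : 0 < α) (x : ℝ) :
    deriv (sc α v) x = Real.sqrt α * (α * deriv v (α * x)) := by
  have : sc α v = fun y => Real.sqrt α * (fun z => v (α * z)) y := rfl
  rw [this, deriv_const_mul_field, deriv_comp_mul v hα.ne' x]

lemma l2Sq_sc (v : ℝ → ℝ) {α : ℝ} (hα : 0 < α) : l2Sq (sc α v) = l2Sq v := by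
  unfold l2Sq sc
  have h : ∀ x : ℝ, (Real.sqrt α * v (α * x)) ^ 2 = α * (fun y => v y ^ 2) (α * x) := by
    intro x
    simp only [mul_pow, Real.sq_sqrt hα.le]
  simp only [h]
  rw [integral_const_mul, Measure.integral_comp_mul_left (fun y => v y ^ 2) α, smul_eq_mul,
    abs_of_pos (inv_pos.2 hα)]
  field_simp

lemma gradSq_sc (v : ℝ → ℝ) {α : ℝ} (hα : 0 < α) :
    gradSq (sc α v) = α ^ 2 * gradSq v := by
  unfold gradSq
  have h : ∀ x : ℝ, (deriv (sc α v) x) ^ 2 = α ^ 3 * (fun y => (deriv v y) ^ 2) (α * x) := by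
    intro x
    rw [deriv_sc v hα x]
    simp only []
    rw [mul_pow, mul_pow, Real.sq_sqrt hα.le]
    ring
  simp only [h]
  rw [integral_const_mul, Measure.integral_comp_mul_left (fun y => (deriv v y) ^ 2) α,
    smul_eq_mul, abs_of_pos (inv_pos.2 hα)]
  field_simp

lemma sc_zero_sq (v : ℝ → ℝ) {α : ℝ} (hα : 0 < α) :
    (sc α v 0) ^ 2 = α * (v 0) ^ 2 := by
  unfold sc
  rw [mul_zero, mul_pow, Real.sq_sqrt hα.le]

lemma lpp_sc (v : ℝ → ℝ) {p α : ℝ} (hp : 5 ≤ p) (hα : 0 < α) :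
    lpp p (sc α v) = α ^ ((p - 1) / 2) * lpp p v := by
  unfold lpp sc
  have h : ∀ x : ℝ, |Real.sqrt α * v (α * x)| ^ (p + 1)
      = α ^ ((p + 1) / 2) * (fun y => |v y| ^ (p + 1)) (α * x) := by
    intro x
    rw [abs_mul, Real.mul_rpow (abs_nonneg _) (abs_nonneg _),
      abs_of_nonneg (Real.sqrt_nonneg α), Real.sqrt_eq_rpow, ← Real.rpow_mul hα.le]
    ring_nf
  simp only [h]
  rw [integral_const_mul, Measure.integral_comp_mul_left (fun y => |v y| ^ (p + 1)) α,
    smul_eq_mul, abs_of_pos (inv_pos.2 hα), ← mul_assoc]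
  congr 1
  rw [← Real.rpow_neg_one α, ← Real.rpow_add hα]
  congr 1
  ring

lemma InH1_sc (v : ℝ → ℝ) {p α : ℝ} (hp : 5 ≤ p) (hα : 0 < α) (hv : InH1 p v) :
    InH1 p (sc α v) := by
  obtain ⟨hc, hi1, hi2, hi3⟩ := hv
  refine ⟨?_, ?_, ?_, ?_⟩
  · exact continuous_const.mul (hc.comp (continuous_const.mul continuous_id))
  · have h : (fun x : ℝ => (sc α v x) ^ 2) = fun x => α * (fun y => v y ^ 2) (α * x) := by
      funext x
      unfold sc
      simp only [mul_pow, Real.sq_sqrt hα.le]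
    rw [h]
    exact (((integrable_comp_mul_left_iff (fun y => v y ^ 2) hα.ne').2 hi1).const_mul α)
  · have h : (fun x : ℝ => (deriv (sc α v) x) ^ 2)
        = fun x => α ^ 3 * (fun y => (deriv v y) ^ 2) (α * x) := by
      funext x
      rw [deriv_sc v hα x]
      simp only []
      rw [mul_pow, mul_pow, Real.sq_sqrt hα.le]
      ring
    rw [h]
    exact (((integrable_comp_mul_left_iff (fun y => (deriv v y) ^ 2) hα.ne').2 hi2).const_mul _)
  · have h : (fun x : ℝ => |sc α v x| ^ (p + 1))
        = fun x => α ^ ((p + 1) / 2) * (fun y => |v y| ^ (p + 1)) (α * x) := by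
      funext x
      unfold sc
      rw [abs_mul, Real.mul_rpow (abs_nonneg _) (abs_nonneg _),
        abs_of_nonneg (Real.sqrt_nonneg α), Real.sqrt_eq_rpow, ← Real.rpow_mul hα.le]
      ring_nf
    rw [h]
    exact (((integrable_comp_mul_left_iff (fun y => |v y| ^ (p + 1)) hα.ne').2 hi3).const_mul _)

theorem stmt10 (γ p ω : ℝ) (hγ : γ ≤ 0) (hp : 5 ≤ p) (hω : γ ^ 2 / 4 < ω)
    (hd : 0 < NehariInf ω γ p) (v : ℝ → ℝ) (hv : InH1 p v)
    (hrad : ∀ x, v (-x) = v x) (hv0 : v ≠ 0)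
    (hQ : Qfun γ p v = 0) (hI : Ifun ω γ p v < 0) :
    NehariInf ω γ p ≤ Sfun ω γ p v := by
  have hωpos : 0 < ω := lt_of_le_of_lt (by positivity) hω
  have hp1 : (0:ℝ) < p + 1 := by linarith
  set G := gradSq v with hG
  set L := l2Sq v with hL
  set P := lpp p v with hP
  set c := (v 0) ^ 2 with hc
  have hcnn : 0 ≤ c := sq_nonneg _
  have hPnn : 0 ≤ P := by
    rw [hP]; unfold lpp
    exact integral_nonneg fun x => Real.rpow_nonneg (abs_nonneg _) _
  -- L > 0
  have hLpos : 0 < L := by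
    rw [hL]; unfold l2Sq
    rw [integral_pos_iff_support_of_nonneg (fun x => sq_nonneg _) hv.2.1]
    have hopen : IsOpen (Function.support fun x => v x ^ 2) := by
      have : (Function.support fun x => v x ^ 2) = v ⁻¹' {0}ᶜ := by
        ext x
        simp [Function.mem_support, pow_eq_zero_iff]
      rw [this]
      exact hv.1.isOpen_preimage _ isOpen_compl_singleton
    have hne : (Function.support fun x => v x ^ 2).Nonempty := by
      obtain ⟨x, hx⟩ := Function.ne_iff.1 hv0
      exact ⟨x, by simp [Function.mem_support]; exact hx⟩
    exact hopen.measure_pos volume hne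
  -- the function α ↦ I(v^α)
  set f : ℝ → ℝ := fun α => α ^ 2 * G + ω * L - α * (γ * c) - α ^ ((p - 1) / 2) * P with hf
  have hqpos : (0:ℝ) < (p - 1) / 2 := by linarith
  have hfc : Continuous f := by
    apply Continuous.sub
    apply Continuous.sub
    · exact ((continuous_pow 2).mul continuous_const).add continuous_const
    · exact continuous_id.mul continuous_const
    · apply Continuous.mul _ continuous_const
      exact continuous_iff_continuousAt.2 fun x =>
        Real.continuousAt_rpow_const x _ (Or.inr hqpos.le)
  have hIsc : ∀ α : ℝ, 0 < α → Ifun ω γ p (sc α v) = f α := by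
    intro α hα
    unfold Ifun
    rw [gradSq_sc v hα, l2Sq_sc v hα, sc_zero_sq v hα, lpp_sc v hp hα]
    simp only [hf]
    ring
  have hf1 : f 1 < 0 := by
    have : f 1 = Ifun ω γ p v := by
      simp only [hf, one_pow, Real.one_rpow, one_mul]
      unfold Ifun
      ring
    rw [this]; exact hI
  have hf0 : 0 < f 0 := by
    have : f 0 = ω * L := by
      simp only [hf]
      rw [Real.zero_rpow hqpos.ne']
      ring
    rw [this]; positivity
  obtain ⟨α₀, hα₀mem, hα₀⟩ : ∃ α₀ ∈ Set.Ioo (0:ℝ) 1, f α₀ = 0 := by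
    have := intermediate_value_Ioo' (zero_le_one) hfc.continuousOn (a := (0:ℝ)) (b := 1)
    have h0 : (0:ℝ) ∈ Set.Ioo (f 1) (f 0) := ⟨hf1, hf0⟩
    obtain ⟨α₀, hmem, heq⟩ := this h0
    exact ⟨α₀, hmem, heq⟩
  obtain ⟨hα₀pos, hα₀lt1⟩ := hα₀mem
  set w := sc α₀ v with hw
  -- membership in Nehari set
  have hwI : Ifun ω γ p w = 0 := by rw [hw, hIsc α₀ hα₀pos, hα₀]
  have hwH1 : InH1 p w := InH1_sc v hp hα₀pos hv
  have hwrad : ∀ x, w (-x) = w x := by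
    intro x
    simp only [hw]; unfold sc
    rw [mul_neg, hrad]
  have hwne : w ≠ 0 := by
    obtain ⟨x, hx⟩ := Function.ne_iff.1 hv0
    intro hcon
    have : w (α₀⁻¹ * x) = 0 := by rw [hcon]; rfl
    apply hx
    simp only [hw] at this; unfold sc at this
    rw [mul_inv_cancel_left₀ hα₀pos.ne'] at this
    rcases mul_eq_zero.1 this with h | h
    · exact absurd h (Real.sqrt_ne_zero'.2 hα₀pos).elim
    · exact h
  have hmem : Sfun ω γ p w ∈ {s : ℝ | ∃ u : ℝ → ℝ, InH1 p u ∧ (∀ x, u (-x) = u x) ∧ u ≠ 0 ∧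
      Ifun ω γ p u = 0 ∧ s = Sfun ω γ p u} := ⟨w, hwH1, hwrad, hwne, hwI, rfl⟩
  have hbdd : BddBelow {s : ℝ | ∃ u : ℝ → ℝ, InH1 p u ∧ (∀ x, u (-x) = u x) ∧ u ≠ 0 ∧
      Ifun ω γ p u = 0 ∧ s = Sfun ω γ p u} := by
    by_contra hcon
    rw [NehariInf] at hd
    rw [Real.sInf_of_not_bddBelow hcon] at hd
    exact lt_irrefl 0 hd
  have hle : NehariInf ω γ p ≤ Sfun ω γ p w := csInf_le hbdd hmem
  refine hle.trans ?_
  -- monotonicity part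
  have hSw : Sfun ω γ p w = α₀ ^ 2 * G / 2 + ω / 2 * L - α₀ * (γ / 2 * c)
      - α₀ ^ ((p - 1) / 2) * P / (p + 1) := by
    rw [hw]
    unfold Sfun
    rw [gradSq_sc v hα₀pos, l2Sq_sc v hα₀pos, sc_zero_sq v hα₀pos, lpp_sc v hp hα₀pos]
    ring
  have hSv : Sfun ω γ p v = G / 2 + ω / 2 * L - γ / 2 * c - P / (p + 1) := rfl
  have hGQ : G = γ / 2 * c + (p - 1) / (2 * (p + 1)) * P := by
    have := hQ
    unfold Qfun at this
    rw [← hG, ← hc, ← hP] at this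
    linarith
  set t := α₀ ^ ((p - 1) / 2) with ht
  have hBern : 1 + (p - 1) / 4 * (α₀ ^ 2 - 1) ≤ t := by
    have hs : (-1:ℝ) ≤ α₀ ^ 2 - 1 := by nlinarith
    have he : (1:ℝ) ≤ (p - 1) / 4 := by linarith
    have := one_add_mul_self_le_rpow_one_add hs he
    rw [add_sub_cancel] at this
    calc 1 + (p - 1) / 4 * (α₀ ^ 2 - 1) ≤ (α₀ ^ 2) ^ ((p - 1) / 4) := this
      _ = t := by
        rw [ht, ← Real.rpow_natCast α₀ 2, ← Real.rpow_mul hα₀pos.le]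
        congr 1
        ring
  have hkey : Sfun ω γ p v - Sfun ω γ p w
      = (-γ) * c * (1 - α₀) ^ 2 / 4
        + P * (t - 1 - (p - 1) / 4 * (α₀ ^ 2 - 1)) / (p + 1) := by
    rw [hSv, hSw, hGQ]
    field_simp
    ring
  have h1 : 0 ≤ (-γ) * c * (1 - α₀) ^ 2 / 4 := by
    have hng : 0 ≤ -γ := by linarith
    have := mul_nonneg (mul_nonneg hng hcnn) (sq_nonneg (1 - α₀))
    linarith
  have h2 : 0 ≤ P * (t - 1 - (p - 1) / 4 * (α₀ ^ 2 - 1)) / (p + 1) := by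
    apply div_nonneg _ hp1.le
    apply mul_nonneg hPnn
    linarith
  linarith
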